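/- arXiv:1507.06737 — 6 statements merged into one kernel-verified Lean document; each statement's English description precedes it below -/
import Mathlib

section
/- Let c1 ≤ c2 and c3 be real numbers with 0 < c1 ≤ c2 and 0 < c3, and let D = {(d1,d2) ∈ ℝ² : d1 ≥ 0, d2 ≥ 0, d1 ≤ c1, d2 ≤ c1, d1/c1 + d2/c2 ≤ c3/c1, d1/c2 + d2/c1 ≤ c3/c1}. Then the supremum of d1 + d2 over (d1,d2) ∈ D equals min(2·c1, 2·c2·c3/(c1+c2)), and this supremum is attained (at the symmetric point (c2·c3/(c1+c2), c2·c3/(c1+c2)) when 2·c2·c3/(c1+c2) ≤ 2·c1, and at (c1,c1) otherwise). -/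
/-- The linear-programming computation underlying the sum DoF of the ICCR:
the region `D` cut out by `d1, d2 ∈ [0, c1]` and the two cross constraints
has supremum of `d1 + d2` equal to `min (2*c1) (2*c2*c3/(c1+c2))`, attained
at the symmetric point when `2*c2*c3/(c1+c2) ≤ 2*c1`, and at `(c1, c1)`
otherwise. -/
theorem sum_dof_lp (c1 c2 c3 : ℝ) (hc1 : 0 < c1) (hc12 : c1 ≤ c2) (hc3 : 0 < c3)
    (D : Set (ℝ × ℝ))
    (hD : D = {p : ℝ × ℝ | 0 ≤ p.1 ∧ 0 ≤ p.2 ∧ p.1 ≤ c1 ∧ p.2 ≤ c1 ∧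
      p.1 / c1 + p.2 / c2 ≤ c3 / c1 ∧ p.1 / c2 + p.2 / c1 ≤ c3 / c1}) :
    IsGreatest ((fun p : ℝ × ℝ => p.1 + p.2) '' D)
      (min (2 * c1) (2 * c2 * c3 / (c1 + c2))) ∧
    (2 * c2 * c3 / (c1 + c2) ≤ 2 * c1 →
      (c2 * c3 / (c1 + c2), c2 * c3 / (c1 + c2)) ∈ D ∧
      c2 * c3 / (c1 + c2) + c2 * c3 / (c1 + c2)
        = min (2 * c1) (2 * c2 * c3 / (c1 + c2))) ∧
    (2 * c1 < 2 * c2 * c3 / (c1 + c2) →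
      (c1, c1) ∈ D ∧ c1 + c1 = min (2 * c1) (2 * c2 * c3 / (c1 + c2))) := by
  have hc2 : 0 < c2 := lt_of_lt_of_le hc1 hc12
  have hsum : 0 < c1 + c2 := by linarith
  set s := c2 * c3 / (c1 + c2) with hs
  have hs0 : 0 < s := by positivity
  have hseq : s * (c1 + c2) = c2 * c3 := by
    rw [hs]; field_simp
  -- membership of symmetric point when s ≤ c1
  have hmemS : s ≤ c1 → (s, s) ∈ D := by
    intro hsc1
    rw [hD]
    refine ⟨le_of_lt hs0, le_of_lt hs0, hsc1, hsc1, ?_, ?_⟩ <;>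
    · simp only
      first
      | rw [div_add_div _ _ (ne_of_gt hc1) (ne_of_gt hc2),
          div_le_div_iff₀ (by positivity) hc1]
      | rw [div_add_div _ _ (ne_of_gt hc2) (ne_of_gt hc1),
          div_le_div_iff₀ (by positivity) hc1]
      nlinarith [hseq]
  -- membership of (c1, c1) when c1 ≤ s
  have hmemC : c1 ≤ s → (c1, c1) ∈ D := by
    intro hcs
    rw [hD]
    have hkey : c1 * (c1 + c2) ≤ c2 * c3 := by nlinarith [mul_le_mul_of_nonneg_right hcs hsum.le]
    refine ⟨le_of_lt hc1, le_of_lt hc1, le_refl _, le_refl _, ?_, ?_⟩ <;>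
    · simp only
      first
      | rw [div_add_div _ _ (ne_of_gt hc1) (ne_of_gt hc2),
          div_le_div_iff₀ (by positivity) hc1]
      | rw [div_add_div _ _ (ne_of_gt hc2) (ne_of_gt hc1),
          div_le_div_iff₀ (by positivity) hc1]
      nlinarith [mul_le_mul_of_nonneg_right hkey hc1.le]
  -- upper bound
  have hub : ∀ p ∈ D, p.1 + p.2 ≤ min (2 * c1) (2 * s) := by
    intro p hp
    rw [hD] at hp
    obtain ⟨h0, h0', h1, h2, h3, h4⟩ := hp
    refine le_min (by linarith) ?_
    rw [div_add_div _ _ (ne_of_gt hc1) (ne_of_gt hc2), div_le_div_iff₀ (by positivity) hc1] at h3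
    rw [div_add_div _ _ (ne_of_gt hc2) (ne_of_gt hc1), div_le_div_iff₀ (by positivity) hc1] at h4
    have hkey : (p.1 + p.2) * (c1 + c2) ≤ 2 * (c2 * c3) := by nlinarith
    have : p.1 + p.2 ≤ 2 * (c2 * c3) / (c1 + c2) := by
      rw [le_div_iff₀ hsum]; linarith
    calc p.1 + p.2 ≤ 2 * (c2 * c3) / (c1 + c2) := this
      _ = 2 * s := by rw [hs]; ring
  have h2s : 2 * c2 * c3 / (c1 + c2) = 2 * s := by rw [hs]; ring
  rw [h2s]
  refine ⟨⟨?_, fun x hx => ?_⟩, fun h => ⟨hmemS (by linarith), ?_⟩,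
    fun h => ⟨hmemC (by linarith), ?_⟩⟩
  · rcases le_total s c1 with hle | hle
    · exact ⟨(s, s), hmemS hle, by rw [min_eq_right (by linarith)]; ring⟩
    · exact ⟨(c1, c1), hmemC hle, by rw [min_eq_left (by linarith)]; ring⟩
  · obtain ⟨p, hp, rfl⟩ := hx; exact hub p hp
  · rw [min_eq_right h]; ring
  · rw [min_eq_left (le_of_lt h)]; ring
end

section
/- Let M_t, M_c, M_r be positive integers with M_r < M_t + M_c. Then D_no(M_t,M_c,M_r) is a proper subset of D_CSI(M_t,M_c,M_r). -/
/-- The delayed-feedback DoF region of the two-user MIMO interference channel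
with a cognitive relay, with `Mt` antennas per transmitter, `Mc` antennas at
the cognitive relay, and `Mr` antennas per receiver. -/
def DCSI (Mt Mc Mr : ℕ) : Set (ℝ × ℝ) :=
  {p : ℝ × ℝ | 0 ≤ p.1 ∧ 0 ≤ p.2 ∧
    p.1 ≤ min (Mr : ℝ) ((Mt : ℝ) + (Mc : ℝ)) ∧
    p.2 ≤ min (Mr : ℝ) ((Mt : ℝ) + (Mc : ℝ)) ∧
    p.1 / min (Mr : ℝ) ((Mt : ℝ) + (Mc : ℝ))
      + p.2 / min (2 * (Mr : ℝ)) ((Mt : ℝ) + (Mc : ℝ))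
      ≤ min (Mr : ℝ) (2 * (Mt : ℝ) + (Mc : ℝ)) / min (Mr : ℝ) ((Mt : ℝ) + (Mc : ℝ)) ∧
    p.1 / min (2 * (Mr : ℝ)) ((Mt : ℝ) + (Mc : ℝ))
      + p.2 / min (Mr : ℝ) ((Mt : ℝ) + (Mc : ℝ))
      ≤ min (Mr : ℝ) (2 * (Mt : ℝ) + (Mc : ℝ)) / min (Mr : ℝ) ((Mt : ℝ) + (Mc : ℝ))}

/-- The no-feedback DoF region of the two-user MIMO interference channel
with a cognitive relay. -/
def Dno (Mt Mc Mr : ℕ) : Set (ℝ × ℝ) :=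
  {p : ℝ × ℝ | 0 ≤ p.1 ∧ 0 ≤ p.2 ∧
    p.1 ≤ min (Mr : ℝ) ((Mt : ℝ) + (Mc : ℝ)) ∧
    p.2 ≤ min (Mr : ℝ) ((Mt : ℝ) + (Mc : ℝ)) ∧
    p.1 + p.2 ≤ min (Mr : ℝ) (2 * (Mt : ℝ) + (Mc : ℝ))}

/-! With `c₁, c₂, c₃` as in the paper, `Dno = sumBoundRegion c₁ c₃` and
`DCSI = weightedSumRegion c₁ c₂ c₃`, and `Mr < Mt + Mc` gives `c₁ = c₃ = Mr < c₂`.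
For `a ≤ b` the weighted bounds `p.1 / a + p.2 / b ≤ c / a` (and its mirror image) follow
from the sum bound `p.1 + p.2 ≤ c`. For `a < b` they meet on the diagonal at
`d = b c / (a + b)`, and `2 d > c`, so this corner is only in the weighted region. -/

def sumBoundRegion (a c : ℝ) : Set (ℝ × ℝ) :=
  {p | 0 ≤ p.1 ∧ 0 ≤ p.2 ∧ p.1 ≤ a ∧ p.2 ≤ a ∧ p.1 + p.2 ≤ c}

def weightedSumRegion (a b c : ℝ) : Set (ℝ × ℝ) :=
  {p | 0 ≤ p.1 ∧ 0 ≤ p.2 ∧ p.1 ≤ a ∧ p.2 ≤ a ∧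
    p.1 / a + p.2 / b ≤ c / a ∧ p.1 / b + p.2 / a ≤ c / a}

theorem sumBoundRegion_subset_weightedSumRegion {a b c : ℝ} (ha : 0 < a) (hab : a ≤ b) :
    sumBoundRegion a c ⊆ weightedSumRegion a b c := by
  rintro ⟨x, y⟩ ⟨hx, hy, hxa, hya, hsum⟩
  have hdiv : (x + y) / a ≤ c / a := by gcongr
  have hxb : x / b ≤ x / a := by gcongr
  have hyb : y / b ≤ y / a := by gcongr
  refine ⟨hx, hy, hxa, hya, ?_, ?_⟩ <;> rw [add_div] at hdiv <;> linarith

theorem diag_mem_weightedSumRegion {a b c : ℝ} (ha : 0 < a) (hb : 0 < b) (hc : 0 ≤ c)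
    (hca : c ≤ a) :
    (b * c / (a + b), b * c / (a + b)) ∈ weightedSumRegion a b c := by
  have hd : 0 ≤ b * c / (a + b) := by positivity
  have hda : b * c / (a + b) ≤ a := by
    rw [div_le_iff₀ (by positivity)]
    nlinarith
  have hline : b * c / (a + b) / a + b * c / (a + b) / b = c / a := by
    field_simp
    ring
  exact ⟨hd, hd, hda, hda, hline.le, by linarith⟩

theorem diag_notMem_sumBoundRegion {a b c : ℝ} (ha : 0 < a) (hab : a < b) (hc : 0 < c) :
    (b * c / (a + b), b * c / (a + b)) ∉ sumBoundRegion a c := by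
  rintro ⟨-, -, -, -, hsum⟩
  have : 2 * (b * c) ≤ c * (a + b) := by
    rw [← add_div, div_le_iff₀ (by linarith)] at hsum
    linarith
  nlinarith

theorem sumBoundRegion_ssubset_weightedSumRegion {a b c : ℝ} (ha : 0 < a) (hab : a < b)
    (hc : 0 < c) (hca : c ≤ a) :
    sumBoundRegion a c ⊂ weightedSumRegion a b c :=
  Set.ssubset_iff_subset_ne.2 ⟨sumBoundRegion_subset_weightedSumRegion ha hab.le, fun heq =>
    diag_notMem_sumBoundRegion ha hab hc
      (heq ▸ diag_mem_weightedSumRegion ha (ha.trans hab) hc.le hca)⟩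

theorem Dno_ssubset_DCSI_of_antennas_general (Mt Mc Mr : ℕ)
    (hMr : 0 < Mr) (h : Mr < Mt + Mc) :
    Dno Mt Mc Mr ⊂ DCSI Mt Mc Mr := by
  have hr : (0 : ℝ) < Mr := by exact_mod_cast hMr
  have hlt : (Mr : ℝ) < Mt + Mc := by exact_mod_cast h
  have hMt : (0 : ℝ) ≤ Mt := Nat.cast_nonneg Mt
  have hc1 : min (Mr : ℝ) (Mt + Mc) = Mr := min_eq_left hlt.le
  have hc3 : min (Mr : ℝ) (2 * Mt + Mc) = Mr := min_eq_left (by linarith)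
  show sumBoundRegion _ _ ⊂ weightedSumRegion _ _ _
  rw [hc1, hc3]
  exact sumBoundRegion_ssubset_weightedSumRegion hr (lt_min (by linarith) hlt) hr le_rfl

/-- When `Mr < Mt + Mc`, delayed feedback strictly enlarges the DoF region of
the MIMO interference channel with a cognitive relay. -/
theorem Dno_ssubset_DCSI_of_antennas (Mt Mc Mr : ℕ) (hMt : 0 < Mt) (hMc : 0 < Mc)
    (hMr : 0 < Mr) (h : Mr < Mt + Mc) :
    Dno Mt Mc Mr ⊂ DCSI Mt Mc Mr :=
  Dno_ssubset_DCSI_of_antennas_general Mt Mc Mr hMr h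
end

section
/- Let M_t, M_c, M_r be positive integers with (M_t + M_c)/2 ≤ M_r < M_t + M_c. Then the supremum of d1 + d2 over (d1,d2) ∈ D_CSI(M_t,M_c,M_r) equals 2(M_t+M_c)M_r/(M_t+M_c+M_r), and it is attained at the point ((M_t+M_c)M_r/(M_t+M_c+M_r), (M_t+M_c)M_r/(M_t+M_c+M_r)), which lies in D_CSI(M_t,M_c,M_r) and satisfies both d1/(M_t+M_c) + d2/M_r = 1 and d1/M_r + d2/(M_t+M_c) = 1. -/
/-- In the regime `(Mt + Mc)/2 ≤ Mr < Mt + Mc`, the sum DoF of the MIMO ICCR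
with delayed feedback is `2(Mt+Mc)Mr/(Mt+Mc+Mr)`, attained at the symmetric
point `((Mt+Mc)Mr/(Mt+Mc+Mr), (Mt+Mc)Mr/(Mt+Mc+Mr))`, which lies in the region
and on both lines `d1/(Mt+Mc) + d2/Mr = 1` and `d1/Mr + d2/(Mt+Mc) = 1`. -/
theorem sum_dof_condition_II_III (Mt Mc Mr : ℕ) (hMt : 0 < Mt) (hMc : 0 < Mc)
    (hMr : 0 < Mr) (h1 : ((Mt : ℝ) + (Mc : ℝ)) / 2 ≤ (Mr : ℝ))
    (h2 : (Mr : ℝ) < (Mt : ℝ) + (Mc : ℝ)) :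
    IsGreatest ((fun p : ℝ × ℝ => p.1 + p.2) '' DCSI Mt Mc Mr)
      (2 * ((Mt : ℝ) + (Mc : ℝ)) * (Mr : ℝ) / ((Mt : ℝ) + (Mc : ℝ) + (Mr : ℝ))) ∧
    (((Mt : ℝ) + (Mc : ℝ)) * (Mr : ℝ) / ((Mt : ℝ) + (Mc : ℝ) + (Mr : ℝ)),
      ((Mt : ℝ) + (Mc : ℝ)) * (Mr : ℝ) / ((Mt : ℝ) + (Mc : ℝ) + (Mr : ℝ)))
      ∈ DCSI Mt Mc Mr ∧
    ((Mt : ℝ) + (Mc : ℝ)) * (Mr : ℝ) / ((Mt : ℝ) + (Mc : ℝ) + (Mr : ℝ))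
        + ((Mt : ℝ) + (Mc : ℝ)) * (Mr : ℝ) / ((Mt : ℝ) + (Mc : ℝ) + (Mr : ℝ))
      = 2 * ((Mt : ℝ) + (Mc : ℝ)) * (Mr : ℝ) / ((Mt : ℝ) + (Mc : ℝ) + (Mr : ℝ)) ∧
    (((Mt : ℝ) + (Mc : ℝ)) * (Mr : ℝ) / ((Mt : ℝ) + (Mc : ℝ) + (Mr : ℝ)))
        / ((Mt : ℝ) + (Mc : ℝ))
      + (((Mt : ℝ) + (Mc : ℝ)) * (Mr : ℝ) / ((Mt : ℝ) + (Mc : ℝ) + (Mr : ℝ)))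
        / (Mr : ℝ) = 1 ∧
    (((Mt : ℝ) + (Mc : ℝ)) * (Mr : ℝ) / ((Mt : ℝ) + (Mc : ℝ) + (Mr : ℝ)))
        / (Mr : ℝ)
      + (((Mt : ℝ) + (Mc : ℝ)) * (Mr : ℝ) / ((Mt : ℝ) + (Mc : ℝ) + (Mr : ℝ)))
        / ((Mt : ℝ) + (Mc : ℝ)) = 1 := by
  set A : ℝ := (Mt : ℝ) + (Mc : ℝ) with hA
  set R : ℝ := (Mr : ℝ) with hR
  have hApos : 0 < A := by
    have h1 : (0:ℝ) < (Mt:ℝ) := by exact_mod_cast hMt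
    have h2 : (0:ℝ) ≤ (Mc:ℝ) := Nat.cast_nonneg _
    rw [hA]; linarith
  have hRpos : 0 < R := by rw [hR]; exact_mod_cast hMr
  have hSpos : 0 < A + R := by linarith
  have hm1 : min R A = R := min_eq_left h2.le
  have hm2 : min (2 * R) A = A := min_eq_right (by linarith)
  have hm3 : min R (2 * (Mt : ℝ) + (Mc : ℝ)) = R := by
    apply min_eq_left
    have : (0:ℝ) ≤ (Mt : ℝ) := Nat.cast_nonneg _
    have : A ≤ 2 * (Mt : ℝ) + (Mc : ℝ) := by simp only [hA]; linarith
    linarith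
  set d : ℝ := A * R / (A + R) with hd
  have hdnn : 0 ≤ d := by positivity
  have hdR : d ≤ R := by
    rw [hd, div_le_iff₀ hSpos]
    nlinarith
  have hline : d / A + d / R = 1 := by
    rw [hd]; field_simp; ring
  have hmem : (d, d) ∈ DCSI Mt Mc Mr := by
    refine ⟨hdnn, hdnn, ?_, ?_, ?_, ?_⟩ <;>
      simp only [← hA, ← hR, hm1, hm2, hm3]
    · exact hdR
    · exact hdR
    · rw [div_self hRpos.ne']; linarith [hline]
    · rw [div_self hRpos.ne']; linarith [hline]
  refine ⟨⟨⟨(d, d), hmem, by rw [hd]; ring⟩, ?_⟩, hmem, by rw [hd]; ring, hline, ?_⟩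
  · rintro x ⟨⟨p, q⟩, hp, rfl⟩
    obtain ⟨h01, h02, hc1, hc2, hc3, hc4⟩ := hp
    simp only [← hA, ← hR, hm1, hm2, hm3, div_self hRpos.ne'] at hc3 hc4
    simp only at h01 h02 hc3 hc4 ⊢
    rw [le_div_iff₀ hSpos]
    have e3 : p * A + q * R ≤ R * A := by
      rw [div_add_div _ _ hRpos.ne' hApos.ne', div_le_one (by positivity)] at hc3
      linarith
    have e4 : p * R + q * A ≤ R * A := by
      rw [div_add_div _ _ hApos.ne' hRpos.ne', div_le_one (by positivity)] at hc4
      linarith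
    nlinarith
  · rw [hd]; field_simp
end

section
/- Let M_t, M_c, M_r be positive integers with M_r < (M_t + M_c)/2. Then the supremum of d1 + d2 over (d1,d2) ∈ D_CSI(M_t,M_c,M_r) equals 4·M_r/3, and it is attained at the point (2·M_r/3, 2·M_r/3), which lies in D_CSI(M_t,M_c,M_r). -/
/-- In the regime `Mr < (Mt + Mc)/2`, the sum DoF of the MIMO ICCR with
delayed feedback is `4*Mr/3`, attained at `(2*Mr/3, 2*Mr/3)`, which lies in
the region. -/
theorem sum_dof_condition_IV_V (Mt Mc Mr : ℕ) (hMt : 0 < Mt) (hMc : 0 < Mc)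
    (hMr : 0 < Mr) (h : (Mr : ℝ) < ((Mt : ℝ) + (Mc : ℝ)) / 2) :
    IsGreatest ((fun p : ℝ × ℝ => p.1 + p.2) '' DCSI Mt Mc Mr)
      (4 * (Mr : ℝ) / 3) ∧
    (2 * (Mr : ℝ) / 3, 2 * (Mr : ℝ) / 3) ∈ DCSI Mt Mc Mr := by
  have hr : (0 : ℝ) < Mr := by exact_mod_cast hMr
  have h1 : min (Mr : ℝ) ((Mt : ℝ) + (Mc : ℝ)) = Mr := by
    apply min_eq_left; linarith
  have h2 : min (2 * (Mr : ℝ)) ((Mt : ℝ) + (Mc : ℝ)) = 2 * Mr := by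
    apply min_eq_left; linarith
  have h3 : min (Mr : ℝ) (2 * (Mt : ℝ) + (Mc : ℝ)) = Mr := by
    have hMc' : (0 : ℝ) < Mc := by exact_mod_cast hMc
    have hMt' : (0 : ℝ) < Mt := by exact_mod_cast hMt
    apply min_eq_left; linarith
  have hmem : (2 * (Mr : ℝ) / 3, 2 * (Mr : ℝ) / 3) ∈ DCSI Mt Mc Mr := by
    simp only [DCSI, Set.mem_setOf_eq, h1, h2, h3]
    refine ⟨by positivity, by positivity, by linarith, by linarith, ?_, ?_⟩ <;>
    · rw [div_self (ne_of_gt hr)]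
      have e1 : 2 * (Mr : ℝ) / 3 / Mr = 2/3 := by field_simp
      have e2 : 2 * (Mr : ℝ) / 3 / (2 * Mr) = 1/3 := by field_simp
      rw [e1, e2]; norm_num
  refine ⟨⟨⟨_, hmem, by simp; ring⟩, ?_⟩, hmem⟩
  rintro x ⟨⟨d1, d2⟩, hp, rfl⟩
  simp only [DCSI, Set.mem_setOf_eq, h1, h2, h3] at hp
  obtain ⟨hd1, hd2, _, _, hc1, hc2⟩ := hp
  have e1 : d1 / Mr + d2 / (2 * Mr) ≤ 1 := by rwa [div_self (ne_of_gt hr)] at hc1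
  have e2 : d1 / (2 * Mr) + d2 / Mr ≤ 1 := by rwa [div_self (ne_of_gt hr)] at hc2
  rw [div_add_div _ _ (ne_of_gt hr) (by positivity), div_le_one (by positivity)] at e1
  rw [div_add_div _ _ (by positivity : (2*(Mr:ℝ)) ≠ 0) (ne_of_gt hr), div_le_one (by positivity)] at e2
  simp only
  nlinarith
end

section
/- For all positive integers M_t, M_r and all positive integers M_c ≤ M_c', the region D_CSI(M_t,M_c,M_r) is contained in the region D_CSI(M_t,M_c',M_r); that is, the delayed-feedback DoF region is monotone nondecreasing in the number of cognitive-relay antennas. -/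
lemma min_mul_min_le_min_mul_min {r s x y : ℝ} (hr : 0 ≤ r) (hx : 0 ≤ x) (hrs : r ≤ s)
    (hxy : x ≤ y) : min r y * min s x ≤ min r x * min s y := by
  rcases le_total x r with hxr | hrx
  · rw [min_eq_right hxr, min_eq_right (hxr.trans hrs), mul_comm x]
    exact mul_le_mul_of_nonneg_right (min_le_min_right y hrs) hx
  · rw [min_eq_left hrx, min_eq_left (hrx.trans hxy)]
    exact mul_le_mul_of_nonneg_left (min_le_min_left s hxy) hr

/-- `x ↦ min r x / min s x` is antitone on `x > 0`: it is `1`, then `r / x`, then `r / s`. -/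
lemma min_div_min_le_min_div_min {r s x y : ℝ} (hr : 0 < r) (hx : 0 < x) (hrs : r ≤ s)
    (hxy : x ≤ y) : min r y / min s y ≤ min r x / min s x := by
  rw [div_le_div_iff₀ (lt_min (hr.trans_le hrs) (hx.trans_le hxy)) (lt_min (hr.trans_le hrs) hx)]
  exact min_mul_min_le_min_mul_min hr.le hx.le hrs hxy

lemma div_add_div_le_div_iff {a b c p q : ℝ} (ha : 0 < a) (hb : 0 < b) :
    p / a + q / b ≤ c / a ↔ p + a / b * q ≤ c := by
  have : p / a + q / b = (p + a / b * q) / a := by field_simp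
  rw [this, div_le_div_iff_of_pos_right ha]

lemma div_add_div_le_div_of_div_le {a b a' b' c c' p q : ℝ} (ha : 0 < a) (hb : 0 < b)
    (ha' : 0 < a') (hb' : 0 < b') (hq : 0 ≤ q) (hab : a' / b' ≤ a / b) (hc : c ≤ c')
    (H : p / a + q / b ≤ c / a) : p / a' + q / b' ≤ c' / a' := by
  rw [div_add_div_le_div_iff ha hb] at H
  rw [div_add_div_le_div_iff ha' hb']
  calc p + a' / b' * q ≤ p + a / b * q := by gcongr
    _ ≤ c := H
    _ ≤ c' := hc

theorem DCSI_mono_relay_general (Mt Mr Mc Mc' : ℕ) (hMt : 0 < Mt) (hMr : 0 < Mr)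
    (h : Mc ≤ Mc') :
    DCSI Mt Mc Mr ⊆ DCSI Mt Mc' Mr := by
  rintro p ⟨hp, hq, hp_le, hq_le, h₁, h₂⟩
  have hr : (0 : ℝ) < Mr := by exact_mod_cast hMr
  have hx : (0 : ℝ) < Mt + Mc := by
    have : (0 : ℝ) < Mt := by exact_mod_cast hMt
    positivity
  have hx' : (0 : ℝ) < Mt + Mc' := hx.trans_le (by gcongr)
  have ha : (0 : ℝ) < min (Mr : ℝ) (Mt + Mc) := lt_min hr hx
  have ha' : (0 : ℝ) < min (Mr : ℝ) (Mt + Mc') := lt_min hr hx'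
  have hb : (0 : ℝ) < min (2 * Mr : ℝ) (Mt + Mc) := lt_min (by positivity) hx
  have hb' : (0 : ℝ) < min (2 * Mr : ℝ) (Mt + Mc') := lt_min (by positivity) hx'
  have hc₁ : min (Mr : ℝ) (Mt + Mc) ≤ min (Mr : ℝ) (Mt + Mc') := by gcongr
  have hc₃ : min (Mr : ℝ) (2 * Mt + Mc) ≤ min (Mr : ℝ) (2 * Mt + Mc') := by gcongr
  have hratio := min_div_min_le_min_div_min hr hx (by linarith : (Mr : ℝ) ≤ 2 * Mr)
    (by gcongr : (Mt + Mc : ℝ) ≤ Mt + Mc')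
  refine ⟨hp, hq, hp_le.trans hc₁, hq_le.trans hc₁, ?_, ?_⟩
  · exact div_add_div_le_div_of_div_le ha hb ha' hb' hq hratio hc₃ h₁
  · rw [add_comm] at h₂ ⊢
    exact div_add_div_le_div_of_div_le ha hb ha' hb' hp hratio hc₃ h₂

/-- The delayed-feedback DoF region of the MIMO ICCR is monotone nondecreasing
in the number of cognitive-relay antennas. -/
theorem DCSI_mono_relay (Mt Mr Mc Mc' : ℕ) (hMt : 0 < Mt) (hMr : 0 < Mr)
    (hMc : 0 < Mc) (hMc' : 0 < Mc') (h : Mc ≤ Mc') :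
    DCSI Mt Mc Mr ⊆ DCSI Mt Mc' Mr :=
  DCSI_mono_relay_general Mt Mr Mc Mc' hMt hMr h
end

section
/- Let M_t, M_c, M_r be real numbers with 0 < M_t < M_r < M_t + M_c. Then 3M_t + M_c − M_r > 0 and (M_t+M_c)·M_t/(3M_t+M_c−M_r) < (M_t+M_c)·M_r/(M_t+M_c+M_r). -/
/-- For `0 < Mt < Mr < Mt + Mc`, the per-user DoF `(Mt+Mc)·Mt/(3Mt+Mc−Mr)`
achieved by retrospective interference alignment without delayed feedback at
the cognitive relay lies strictly below the outer-bound corner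
`(Mt+Mc)·Mr/(Mt+Mc+Mr)` (and the denominator `3Mt+Mc−Mr` is positive). -/
theorem achievable_below_outer_bound (Mt Mc Mr : ℝ)
    (hMt : 0 < Mt) (h1 : Mt < Mr) (h2 : Mr < Mt + Mc) :
    0 < 3 * Mt + Mc - Mr ∧
    (Mt + Mc) * Mt / (3 * Mt + Mc - Mr) < (Mt + Mc) * Mr / (Mt + Mc + Mr) := by
  have hd1 : 0 < 3 * Mt + Mc - Mr := by linarith
  have hd2 : 0 < Mt + Mc + Mr := by linarith
  refine ⟨hd1, ?_⟩
  rw [div_lt_div_iff₀ hd1 hd2]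
  nlinarith [mul_pos (sub_pos.mpr h1) (sub_pos.mpr (show Mr - Mt < Mc by linarith) : (0:ℝ) < Mc - (Mr - Mt)), mul_pos hMt (sub_pos.mpr h1)]
end
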